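/- For every natural number n and complex numbers b, c with c ∉ {0, −1, …, −(n−1)}, the Chu–Vandermonde identity holds: Σ_{k=0}^{n} (−1)^k binom(n,k) ((b)_k/(c)_k) = (c−b)_n/(c)_n. -/

import Mathlib

/-- The ascending Pochhammer symbol `(x)_k = x (x+1) ⋯ (x+k-1)`, with `(x)_0 = 1`. -/
noncomputable def poch (x : ℂ) (k : ℕ) : ℂ := ∏ i ∈ Finset.range k, (x + (i : ℂ))

/-!
STATEMENT 10: Chu–Vandermonde identity: for all `n : ℕ` and complex `b`, `c` with
`c ∉ {0, -1, …, -(n-1)}`,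
`Σ_{k=0}^{n} (-1)^k binom(n,k) ((b)_k/(c)_k) = (c-b)_n/(c)_n`.
-/
lemma poch_zero (x : ℂ) : poch x 0 = 1 := rfl

lemma poch_succ (x : ℂ) (n : ℕ) : poch x (n+1) = poch x n * (x + n) :=
  Finset.prod_range_succ _ _

lemma poch_succ' (x : ℂ) (n : ℕ) : poch x (n+1) = x * poch (x+1) n := by
  unfold poch
  rw [Finset.prod_range_succ', mul_comm]
  congr 1
  · simp
  · exact Finset.prod_congr rfl fun i _ => by push_cast; ring

lemma poch_ne_zero (x : ℂ) (n : ℕ) (h : ∀ m : ℕ, m < n → x ≠ -(m : ℂ)) :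
    poch x n ≠ 0 := by
  rw [poch, Finset.prod_ne_zero_iff]
  intro i hi h0
  exact h i (Finset.mem_range.mp hi) (by linear_combination h0)

theorem stmt_10 (n : ℕ) (b c : ℂ) (hc : ∀ m : ℕ, m < n → c ≠ -(m : ℂ)) :
    ∑ k ∈ Finset.range (n + 1), (-1) ^ k * (n.choose k : ℂ) * poch b k / poch c k
      = poch (c - b) n / poch c n := by
  induction n generalizing b c with
  | zero => simp [poch]
  | succ n ih =>
    have hc0 : c ≠ 0 := by
      have := hc 0 (Nat.succ_pos n); simpa using this
    have hcn : poch c n ≠ 0 :=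
      poch_ne_zero _ _ fun m hm => hc m (hm.trans (Nat.lt_succ_self n))
    have hcn1 : poch (c+1) n ≠ 0 := by
      refine poch_ne_zero _ _ fun m hm h0 => hc (m+1) (by omega) ?_
      push_cast
      linear_combination h0
    have hA := ih b c fun m hm => hc m (by omega)
    have hA' : ∑ k ∈ Finset.range (n+1), (-1)^k * (n.choose k : ℂ) * poch (b+1) k / poch (c+1) k
        = poch (c - b) n / poch (c+1) n := by
      have := ih (b+1) (c+1) fun m hm h0 => hc (m+1) (by omega) (by push_cast; linear_combination h0)
      simpa using this
    have key : ∑ k ∈ Finset.range (n + 1 + 1), (-1) ^ k * ((n+1).choose k : ℂ) * poch b k / poch c k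
        = (∑ k ∈ Finset.range (n+1), (-1)^k * (n.choose k : ℂ) * poch b k / poch c k)
          - (b/c) * ∑ k ∈ Finset.range (n+1), (-1)^k * (n.choose k : ℂ) * poch (b+1) k / poch (c+1) k := by
      have hext : ∑ k ∈ Finset.range (n+1), (-1:ℂ)^(k+1) * (n.choose (k+1) : ℂ) * poch b (k+1) / poch c (k+1)
          = ∑ k ∈ Finset.range n, (-1:ℂ)^(k+1) * (n.choose (k+1) : ℂ) * poch b (k+1) / poch c (k+1) := by
        rw [Finset.sum_range_succ]
        simp [Nat.choose_succ_self]
      rw [Finset.sum_range_succ' (fun k => (-1:ℂ)^k * ((n+1).choose k : ℂ) * poch b k / poch c k),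
        Finset.sum_range_succ' (fun k => (-1:ℂ)^k * (n.choose k : ℂ) * poch b k / poch c k),
        Finset.mul_sum, ← hext]
      have hmain : ∑ k ∈ Finset.range (n+1), (-1:ℂ)^(k+1) * ((n+1).choose (k+1) : ℂ) * poch b (k+1) / poch c (k+1)
          = ∑ k ∈ Finset.range (n+1), ((-1:ℂ)^(k+1) * (n.choose (k+1) : ℂ) * poch b (k+1) / poch c (k+1)
            - b / c * ((-1:ℂ)^k * (n.choose k : ℂ) * poch (b+1) k / poch (c+1) k)) := by
        refine Finset.sum_congr rfl fun k _ => ?_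
        rw [poch_succ' b, poch_succ' c, Nat.choose_succ_succ]
        push_cast
        ring
      rw [hmain, Finset.sum_sub_distrib]
      simp [poch_zero]
      ring
    rw [key, hA, hA', poch_succ (c-b) n]
    have hcnn : c + (n:ℂ) ≠ 0 := fun h0 => hc n (Nat.lt_succ_self n) (by linear_combination h0)
    have h2 : poch c n * (c + n) = c * poch (c+1) n := by
      rw [← poch_succ c n, poch_succ' c n]
    rw [poch_succ c n]
    field_simp
    linear_combination (-(b * poch (c-b) n)) * h2
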